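/- arXiv:1810.02204 — 2 statements merged into one kernel-verified Lean document; each statement's English description precedes it below -/
import Mathlib

section
/- For every complex number s with Re(s) > 0 and s ≠ 1, the alternating Dirichlet series Σ_{n=1}^∞ (-1)^{n+1} n^{-s} converges (as the limit of its partial sums) and its sum equals (1 - 2^{1-s}) · ζ(s). -/
/-!
Group the alternating series in pairs: by the mean value theorem
`(2k+1)^(-s) - (2k+2)^(-s) = O(|s| k^(-Re s - 1))`, so the paired series converges locally
uniformly on `Re s > 0` and defines a holomorphic function there. For `Re s > 1` it equals
`ζ(s) - 2 · 2^(-s) ζ(s)` (subtract twice the even terms from the full series), and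
`(1 - 2^(1-s)) ζ(s)` extends to an entire function because the simple zero of `1 - 2^(1-s)`
at `s = 1` cancels the pole of `ζ`; the identity theorem gives equality on `Re s > 0`.
Odd partial sums differ from even ones by a single term `(2m+1)^(-s) → 0`.
-/

open Filter Finset Complex

lemma norm_ofReal_cpow_neg_sub_le {a b : ℝ} (ha : 0 < a) (hab : a ≤ b) {s : ℂ}
    (hs : -1 ≤ s.re) :
    ‖(b : ℂ) ^ (-s) - (a : ℂ) ^ (-s)‖ ≤ ‖s‖ * a ^ (-s.re - 1) * (b - a) := by
  have hderiv : ∀ t ∈ Set.Icc a b, HasDerivWithinAt (fun t : ℝ => (t : ℂ) ^ (-s))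
      (-s * (t : ℂ) ^ (-s - 1)) (Set.Icc a b) t := fun t ht => by
    have h := ((hasDerivAt_id (t : ℂ)).cpow_const (c := -s)
      (ofReal_mem_slitPlane.2 (ha.trans_le ht.1))).comp_ofReal
    simp only [id, mul_one] at h
    exact h.hasDerivWithinAt
  have hbound : ∀ t ∈ Set.Icc a b, ‖-s * (t : ℂ) ^ (-s - 1)‖ ≤ ‖s‖ * a ^ (-s.re - 1) := by
    intro t ht
    rw [norm_mul, norm_neg, norm_cpow_eq_rpow_re_of_pos (ha.trans_le ht.1)]
    gcongr
    simpa using Real.rpow_le_rpow_of_nonpos ha ht.1 (by simp; linarith)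
  simpa [abs_of_nonneg (sub_nonneg.2 hab)] using
    (convex_Icc a b).norm_image_sub_le_of_norm_hasDerivWithin_le hderiv hbound
      (Set.left_mem_Icc.2 hab) (Set.right_mem_Icc.2 hab)

noncomputable def etaPairTerm (k : ℕ) (s : ℂ) : ℂ :=
  ((2 * k + 1 : ℕ) : ℂ) ^ (-s) - ((2 * k + 2 : ℕ) : ℂ) ^ (-s)

lemma differentiable_etaPairTerm (k : ℕ) : Differentiable ℂ (etaPairTerm k) := by
  unfold etaPairTerm
  fun_prop (disch := exact Or.inl (Nat.cast_ne_zero.2 (by omega)))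

lemma norm_etaPairTerm_le {σ : ℝ} (hσ : -1 ≤ σ) {s : ℂ} (hs : σ ≤ s.re) (k : ℕ) :
    ‖etaPairTerm k s‖ ≤ ‖s‖ * (2 * k + 1 : ℝ) ^ (-σ - 1) := by
  have h := norm_ofReal_cpow_neg_sub_le (a := 2 * k + 1) (b := 2 * k + 2) (by positivity)
    (by linarith) (hσ.trans hs)
  calc ‖etaPairTerm k s‖ ≤ ‖s‖ * (2 * k + 1 : ℝ) ^ (-s.re - 1) := by
        rw [etaPairTerm, norm_sub_rev]
        push_cast
        simpa [show (2 * k + 2 : ℝ) - (2 * k + 1) = 1 by ring] using h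
    _ ≤ ‖s‖ * (2 * k + 1 : ℝ) ^ (-σ - 1) := by
        gcongr
        linarith

lemma summable_two_mul_add_one_rpow_neg {p : ℝ} (hp : 1 < p) :
    Summable (fun k : ℕ => (2 * k + 1 : ℝ) ^ (-p)) := by
  have h : Summable (fun k : ℕ => ((k + 1 : ℕ) : ℝ) ^ (-p)) :=
    (summable_nat_add_iff 1).2 (Real.summable_nat_rpow.2 (by linarith))
  refine h.of_nonneg_of_le (fun k => by positivity) (fun k => ?_)
  exact Real.rpow_le_rpow_of_nonpos (by positivity) (by push_cast; linarith) (by linarith)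

lemma summable_etaPairTerm {s : ℂ} (hs : 0 < s.re) : Summable (fun k => etaPairTerm k s) := by
  have h := (summable_two_mul_add_one_rpow_neg (by linarith : 1 < s.re + 1)).mul_left ‖s‖
  simp only [neg_add'] at h
  exact .of_norm_bounded h (norm_etaPairTerm_le (by linarith) le_rfl)

lemma differentiableOn_tsum_etaPairTerm :
    DifferentiableOn ℂ (fun s => ∑' k, etaPairTerm k s) {s | 0 < s.re} := by
  intro s (hs : 0 < s.re)
  set U : Set ℂ := {w | s.re / 2 < w.re} ∩ Metric.ball 0 (‖s‖ + 1)
  have hU : IsOpen U := (isOpen_lt continuous_const continuous_re).inter Metric.isOpen_ball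
  have hsU : s ∈ U := ⟨show s.re / 2 < s.re from half_lt_self hs, by simp⟩
  have hσ : 1 < s.re / 2 + 1 := by linarith
  have hdiff := differentiableOn_tsum_of_summable_norm
    ((summable_two_mul_add_one_rpow_neg hσ).mul_left (‖s‖ + 1))
    (fun k => (differentiable_etaPairTerm k).differentiableOn) hU ?_
  · exact (hdiff.differentiableAt (hU.mem_nhds hsU)).differentiableWithinAt
  rintro k w ⟨hw, hw'⟩
  rw [neg_add']
  refine (norm_etaPairTerm_le (by linarith) hw.le k).trans ?_
  gcongr
  exact (mem_ball_zero_iff.1 hw').le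

lemma hasSum_nat_add_one_cpow_neg_riemannZeta {s : ℂ} (hs : 1 < s.re) :
    HasSum (fun n : ℕ => ((n + 1 : ℕ) : ℂ) ^ (-s)) (riemannZeta s) := by
  have h := (hasSum_nat_add_iff' 1).2 (LSeriesHasSum_one hs)
  simpa [LSeries.term, cpow_neg] using h

noncomputable def etaFactor (s : ℂ) : ℂ := 1 - 2 ^ (1 - s)

lemma hasSum_etaPairTerm_of_one_lt_re {s : ℂ} (hs : 1 < s.re) :
    HasSum (fun k => etaPairTerm k s) (etaFactor s * riemannZeta s) := by
  set f : ℕ → ℂ := fun n => ((n + 1 : ℕ) : ℂ) ^ (-s)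
  have hf : HasSum f (riemannZeta s) := hasSum_nat_add_one_cpow_neg_riemannZeta hs
  have hodd : HasSum (fun k => f (2 * k + 1)) (2 ^ (-s) * riemannZeta s) := by
    have hpow (k : ℕ) : f (2 * k + 1) = 2 ^ (-s) * f k := by
      simp only [f]
      rw [show 2 * k + 1 + 1 = 2 * (k + 1) by ring, Nat.cast_mul, natCast_mul_natCast_cpow,
        Nat.cast_ofNat]
    simpa only [hpow] using hf.mul_left (2 ^ (-s))
  have heven : HasSum (fun k => f (2 * k)) (riemannZeta s - 2 ^ (-s) * riemannZeta s) := by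
    have he := (hf.summable.comp_injective (mul_right_injective₀ (two_ne_zero' ℕ))).hasSum
    exact eq_sub_of_add_eq ((he.even_add_odd hodd).unique hf) ▸ he
  have h21 : etaFactor s = 1 - 2 * 2 ^ (-s) := by
    rw [etaFactor, sub_eq_add_neg (1 : ℂ) s, cpow_add _ _ two_ne_zero, cpow_one]
  rw [h21, show (1 - 2 * 2 ^ (-s)) * riemannZeta s =
    riemannZeta s - 2 ^ (-s) * riemannZeta s - 2 ^ (-s) * riemannZeta s by ring]
  exact heven.sub hodd

lemma differentiable_etaFactor : Differentiable ℂ etaFactor := by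
  unfold etaFactor
  fun_prop (disch := exact Or.inl two_ne_zero)

lemma etaFactor_one : etaFactor 1 = 0 := by simp [etaFactor]

-- Away from `1`, `riemannZeta₁ s = (s - 1) ζ(s)`, so this is the entire continuation of
-- `etaFactor * ζ`.
lemma differentiable_dslope_etaFactor_mul_riemannZeta₁ :
    Differentiable ℂ (fun s => dslope etaFactor 1 s * riemannZeta₁ s) := by
  have h : Differentiable ℂ (dslope etaFactor 1) := differentiableOn_univ.1 <|
    (differentiableOn_dslope Filter.univ_mem).2 differentiable_etaFactor.differentiableOn
  exact h.mul differentiable_riemannZeta₁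

lemma dslope_etaFactor_mul_riemannZeta₁ {s : ℂ} (hs : s ≠ 1) :
    dslope etaFactor 1 s * riemannZeta₁ s = etaFactor s * riemannZeta s := by
  rw [dslope_of_ne _ hs, slope_def_field, etaFactor_one, riemannZeta_eq_inv_sub_mul hs, sub_zero]
  ring

lemma tsum_etaPairTerm_eq_dslope_mul_riemannZeta₁ {s : ℂ} (hs : 0 < s.re) :
    ∑' k, etaPairTerm k s = dslope etaFactor 1 s * riemannZeta₁ s := by
  have hU : IsOpen {s : ℂ | 0 < s.re} := isOpen_lt continuous_const continuous_re
  refine (differentiableOn_tsum_etaPairTerm.analyticOnNhd hU).eqOn_of_preconnected_of_eventuallyEq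
    (differentiable_dslope_etaFactor_mul_riemannZeta₁.differentiableOn.analyticOnNhd hU)
    (convex_halfSpace_re_gt 0).isPreconnected (z₀ := 2) (by simp) ?_ hs
  have hV : IsOpen {s : ℂ | 1 < s.re} := isOpen_lt continuous_const continuous_re
  filter_upwards [hV.mem_nhds (by simp : (1 : ℝ) < (2 : ℂ).re)] with w hw
  have hw1 : w ≠ 1 := by rintro rfl; simp at hw
  rw [(hasSum_etaPairTerm_of_one_lt_re hw).tsum_eq, dslope_etaFactor_mul_riemannZeta₁ hw1]

lemma hasSum_etaPairTerm {s : ℂ} (hs : 0 < s.re) (hs1 : s ≠ 1) :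
    HasSum (fun k => etaPairTerm k s) (etaFactor s * riemannZeta s) := by
  rw [← dslope_etaFactor_mul_riemannZeta₁ hs1, ← tsum_etaPairTerm_eq_dslope_mul_riemannZeta₁ hs]
  exact (summable_etaPairTerm hs).hasSum

lemma sum_range_two_mul_alternating_eq_sum_etaPairTerm (s : ℂ) (m : ℕ) :
    ∑ n ∈ range (2 * m), (-1 : ℂ) ^ n * ((n + 1 : ℕ) : ℂ) ^ (-s) =
      ∑ k ∈ range m, etaPairTerm k s := by
  induction m with
  | zero => simp
  | succ m ih =>
    have h1 : (-1 : ℂ) ^ (2 * m) = 1 := by simp [pow_mul]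
    rw [show 2 * (m + 1) = 2 * m + 1 + 1 by ring, sum_range_succ, sum_range_succ, ih,
      sum_range_succ, etaPairTerm, pow_succ, h1, show 2 * m + 1 + 1 = 2 * m + 2 from rfl]
    ring

lemma Filter.Tendsto.of_comp_two_mul_of_comp_two_mul_add_one {α : Type*} {u : ℕ → α}
    {l : Filter α} (he : Tendsto (fun m => u (2 * m)) atTop l)
    (ho : Tendsto (fun m => u (2 * m + 1)) atTop l) : Tendsto u atTop l := by
  intro t ht
  obtain ⟨a, ha⟩ := eventually_atTop.1 (he ht)
  obtain ⟨b, hb⟩ := eventually_atTop.1 (ho ht)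
  refine mem_atTop_sets.2 ⟨2 * (a + b), fun n hn => ?_⟩
  rcases Nat.even_or_odd' n with ⟨m, rfl | rfl⟩
  · exact ha m (by omega)
  · exact hb m (by omega)

lemma tendsto_natCast_add_one_cpow_neg {s : ℂ} (hs : 0 < s.re) :
    Tendsto (fun n : ℕ => ((n + 1 : ℕ) : ℂ) ^ (-s)) atTop (nhds 0) := by
  rw [tendsto_zero_iff_norm_tendsto_zero]
  simp only [norm_natCast_cpow_of_pos (Nat.succ_pos _), neg_re]
  exact (tendsto_rpow_neg_atTop hs).comp
    (tendsto_natCast_atTop_atTop.comp (tendsto_add_atTop_nat 1))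

/-- For every complex `s` with `Re s > 0` and `s ≠ 1`, the alternating Dirichlet series
`Σ_{n=1}^∞ (-1)^(n+1) n^(-s)` converges (as the limit of its partial sums) and its sum
equals `(1 - 2^(1-s)) * ζ(s)`. -/
theorem alternating_series_eq_eta_factor_mul_zeta (s : ℂ) (hs : 0 < s.re) (hs1 : s ≠ 1) :
    Filter.Tendsto
      (fun N : ℕ => ∑ n ∈ Finset.range N, (-1 : ℂ) ^ n * ((n + 1 : ℕ) : ℂ) ^ (-s))
      Filter.atTop
      (nhds ((1 - (2 : ℂ) ^ ((1 : ℂ) - s)) * riemannZeta s)) := by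
  have heven := (hasSum_etaPairTerm hs hs1).tendsto_sum_nat
  simp only [← sum_range_two_mul_alternating_eq_sum_etaPairTerm] at heven
  refine heven.of_comp_two_mul_of_comp_two_mul_add_one ?_
  have hterm := (tendsto_natCast_add_one_cpow_neg hs).comp (tendsto_id.const_mul_atTop' two_pos)
  simpa [etaFactor, sum_range_succ, pow_mul] using heven.add hterm
end

section
/- Let σ, ρ, ω be real numbers with 0 < σ < 1, and for y > 0 set g(y) = y^{-iω/2} · Σ_{n=1}^∞ (-1)^{n+1} (n·y)^{-iω/2} (n·y)^{-σ+iρ}. Then for every real x > 0, the series x^{iω/2} · Σ_{m=1}^∞ (-1)^{m+1} m^{-1} (x/m)^{iω/2} · g(x/m) converges (as the limit of its partial sums) and its sum equals (1 - 2^{σ-i(ρ-ω/2)}) · (1 - 2^{(1-σ)+i(ρ-ω/2)}) · ζ(σ - i(ρ - ω/2)) · ζ(1 - σ + i(ρ - ω/2)) · x^{-σ+iρ}. -/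
/-!
Both operators act diagonally on powers. Substituting `n y` for `y` turns `A(ω) x^{-σ+iρ}`
into `η(s) y^{-iω/2-s}` with `s = σ - i(ρ - ω/2)`, where `η(s) = ∑ (-1)^{n+1} n^{-s}` is the
Dirichlet eta function; likewise `A†(ω)` multiplies `y^{-iω/2-s}` by `η(1-s)`.

As `0 < re s < 1`, both series converge only conditionally. Grouping consecutive terms, the
mean value theorem bounds the pairs by `|s| (k+1)^{-re s-1}`, so the grouped series converges
locally uniformly to a holomorphic function on `0 < re s`. It equals `(1 - 2^{1-s}) ζ(s)` for
`re s > 1` by splitting `ζ` into even and odd terms, hence on `{0 < re s} \ {1}` by the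
identity theorem.
-/

open Filter Finset Complex Topology

lemma norm_ofReal_cpow_neg_sub_succ_le {s : ℂ} (hs : -1 ≤ s.re) {a : ℝ} (ha : 0 < a) :
    ‖(a : ℂ) ^ (-s) - ((a + 1 : ℝ) : ℂ) ^ (-s)‖ ≤ ‖s‖ * a ^ (-s.re - 1) := by
  have hderiv : ∀ t ∈ Set.Icc a (a + 1), HasDerivWithinAt (fun t : ℝ => (t : ℂ) ^ (-s))
      (-s * (t : ℂ) ^ (-s - 1)) (Set.Icc a (a + 1)) t := fun t ht =>
    (hasStrictDerivAt_cpow_const (ofReal_mem_slitPlane.2 (ha.trans_le ht.1))).hasDerivAt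
      |>.comp_ofReal.hasDerivWithinAt
  have hbound : ∀ t ∈ Set.Icc a (a + 1), ‖-s * (t : ℂ) ^ (-s - 1)‖ ≤ ‖s‖ * a ^ (-s.re - 1) := by
    intro t ht
    rw [norm_mul, norm_neg, norm_cpow_eq_rpow_re_of_pos (ha.trans_le ht.1), sub_re, neg_re,
      one_re]
    exact mul_le_mul_of_nonneg_left (Real.rpow_le_rpow_of_nonpos ha ht.1 (by linarith))
      (norm_nonneg s)
  simpa [norm_sub_rev] using (convex_Icc a (a + 1)).norm_image_sub_le_of_norm_hasDerivWithin_le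
    hderiv hbound (Set.left_mem_Icc.2 (by linarith)) (Set.right_mem_Icc.2 (by linarith))

noncomputable def etaPair (s : ℂ) (k : ℕ) : ℂ :=
  ((2 * k + 1 : ℕ) : ℂ) ^ (-s) - ((2 * k + 2 : ℕ) : ℂ) ^ (-s)

lemma norm_etaPair_le {s : ℂ} {δ : ℝ} (hδ : -1 ≤ δ) (hδs : δ ≤ s.re) (k : ℕ) :
    ‖etaPair s k‖ ≤ ‖s‖ * ((k : ℝ) + 1) ^ (-δ - 1) := by
  have hpair := norm_ofReal_cpow_neg_sub_succ_le (hδ.trans hδs) (a := ((2 * k + 1 : ℕ) : ℝ))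
    (by positivity)
  calc ‖etaPair s k‖ ≤ ‖s‖ * ((2 * k + 1 : ℕ) : ℝ) ^ (-s.re - 1) := by
        rw [etaPair]; convert hpair using 4 <;> push_cast <;> ring
    _ ≤ ‖s‖ * ((k : ℝ) + 1) ^ (-s.re - 1) := by
        gcongr ‖s‖ * ?_
        exact Real.rpow_le_rpow_of_nonpos (by positivity) (by push_cast; linarith) (by linarith)
    _ ≤ ‖s‖ * ((k : ℝ) + 1) ^ (-δ - 1) := by
        gcongr
        simp

lemma summable_natCast_add_one_rpow {p : ℝ} (hp : p < -1) :
    Summable fun k : ℕ => ((k : ℝ) + 1) ^ p := by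
  simpa using (summable_nat_add_iff 1).2 (Real.summable_nat_rpow.2 hp)

/-- The alternating series `∑ (-1)^n (n+1)^{-s}` with consecutive terms grouped, which makes it
absolutely convergent, locally uniformly, on `0 < re s`. -/
noncomputable def dirichletEta (s : ℂ) : ℂ := ∑' k, etaPair s k

lemma hasSum_etaPair {s : ℂ} (hs : 0 < s.re) : HasSum (etaPair s) (dirichletEta s) :=
  Summable.hasSum <| .of_norm_bounded
    ((summable_natCast_add_one_rpow (p := -s.re - 1) (by linarith)).mul_left ‖s‖)
    (norm_etaPair_le (by linarith) le_rfl)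

lemma differentiableOn_dirichletEta : DifferentiableOn ℂ dirichletEta {s | 0 < s.re} := by
  intro s (hs : 0 < s.re)
  set U : Set ℂ := {z | s.re / 2 < z.re ∧ ‖z‖ < ‖s‖ + 1}
  have hU : IsOpen U :=
    (isOpen_lt continuous_const continuous_re).inter (isOpen_lt continuous_norm continuous_const)
  have hsU : s ∈ U := ⟨by linarith, by linarith⟩
  have hdiff : DifferentiableOn ℂ dirichletEta U := by
    refine differentiableOn_tsum_of_summable_norm
      ((summable_natCast_add_one_rpow (p := -(s.re / 2) - 1) (by linarith)).mul_left
        (‖s‖ + 1)) (fun k => ?_) hU fun k z hz => ?_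
    · refine (Differentiable.sub ?_ ?_).differentiableOn <;>
        exact differentiable_neg.const_cpow (.inl (Nat.cast_ne_zero.2 (by omega)))
    · refine (norm_etaPair_le (by linarith) hz.1.le k).trans ?_
      gcongr
      exact hz.2.le
  exact (hdiff.differentiableAt (hU.mem_nhds hsU)).differentiableWithinAt

lemma sum_range_two_mul_alternating_cpow (s : ℂ) (K : ℕ) :
    ∑ n ∈ range (2 * K), (-1 : ℂ) ^ n * ((n + 1 : ℕ) : ℂ) ^ (-s) = ∑ k ∈ range K, etaPair s k := by
  induction K with
  | zero => simp
  | succ K ih =>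
    rw [show 2 * (K + 1) = 2 * K + 1 + 1 by ring, sum_range_succ, sum_range_succ, ih,
      sum_range_succ, etaPair, pow_succ, pow_mul, neg_one_sq, one_pow,
      show 2 * K + 1 + 1 = 2 * K + 2 from rfl]
    ring

lemma Filter.Tendsto.of_even_of_odd {X : Type*} {f : ℕ → X} {l : Filter X}
    (heven : Tendsto (fun n => f (2 * n)) atTop l)
    (hodd : Tendsto (fun n => f (2 * n + 1)) atTop l) : Tendsto f atTop l := by
  intro u hu
  obtain ⟨N₁, hN₁⟩ := eventually_atTop.1 (heven hu)
  obtain ⟨N₂, hN₂⟩ := eventually_atTop.1 (hodd hu)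
  refine eventually_atTop.2 ⟨2 * (N₁ + N₂), fun n hn => ?_⟩
  obtain ⟨k, rfl | rfl⟩ := Nat.even_or_odd' n
  · exact hN₁ k (by omega)
  · exact hN₂ k (by omega)

lemma tendsto_natCast_cpow_neg_atTop_zero {s : ℂ} (hs : 0 < s.re) :
    Tendsto (fun n : ℕ => (n : ℂ) ^ (-s)) atTop (𝓝 0) := by
  rw [tendsto_zero_iff_norm_tendsto_zero]
  refine ((tendsto_rpow_neg_atTop hs).comp tendsto_natCast_atTop_atTop).congr' ?_
  filter_upwards [eventually_gt_atTop 0] with n hn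
  rw [← ofReal_natCast, norm_cpow_eq_rpow_re_of_pos (by positivity)]
  simp

theorem tendsto_sum_range_alternating_cpow {s : ℂ} (hs : 0 < s.re) :
    Tendsto (fun N => ∑ n ∈ range N, (-1 : ℂ) ^ n * ((n + 1 : ℕ) : ℂ) ^ (-s)) atTop
      (𝓝 (dirichletEta s)) := by
  have heven : Tendsto (fun K => ∑ n ∈ range (2 * K), (-1 : ℂ) ^ n * ((n + 1 : ℕ) : ℂ) ^ (-s))
      atTop (𝓝 (dirichletEta s)) := by
    simpa only [sum_range_two_mul_alternating_cpow] using (hasSum_etaPair hs).tendsto_sum_nat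
  refine heven.of_even_of_odd ?_
  have hlast : Tendsto (fun K : ℕ => ((2 * K + 1 : ℕ) : ℂ) ^ (-s)) atTop (𝓝 0) :=
    (tendsto_natCast_cpow_neg_atTop_zero hs).comp
      (StrictMono.tendsto_atTop fun a b h => by omega)
  simpa [sum_range_succ, pow_mul] using heven.add hlast

lemma dirichletEta_eq_of_one_lt_re {s : ℂ} (hs : 1 < s.re) :
    dirichletEta s = (1 - 2 ^ (1 - s)) * riemannZeta s := by
  set f : ℕ → ℂ := fun n => ((n + 1 : ℕ) : ℂ) ^ (-s)
  have hζ : HasSum f (riemannZeta s) := by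
    have hf : f = fun n : ℕ => 1 / ((n : ℂ) + 1) ^ s := by ext n; simp [f, cpow_neg]
    rw [zeta_eq_tsum_one_div_nat_add_one_cpow hs, hf]
    simpa using ((summable_nat_add_iff 1).2 (Complex.summable_one_div_nat_cpow.2 hs)).hasSum
  have hodd : HasSum (fun k => f (2 * k + 1)) (2 ^ (-s) * riemannZeta s) := by
    have hf : (fun k => f (2 * k + 1)) = fun k => 2 ^ (-s) * f k := by
      ext k
      simp only [f, show 2 * k + 1 + 1 = 2 * (k + 1) by ring]
      exact_mod_cast natCast_mul_natCast_cpow 2 (k + 1) (-s)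
    rw [hf]
    exact hζ.mul_left _
  have heven : HasSum (fun k => f (2 * k)) (riemannZeta s - 2 ^ (-s) * riemannZeta s) := by
    have := (hζ.summable.comp_injective (mul_right_injective₀ two_ne_zero)).hasSum
    rwa [eq_sub_of_add_eq ((this.even_add_odd hodd).unique hζ)] at this
  have hpair : etaPair s = fun k => f (2 * k) - f (2 * k + 1) := by
    ext k
    simp only [etaPair, f]
  rw [dirichletEta, hpair, (heven.sub hodd).tsum_eq, sub_eq_add_neg (1 : ℂ) s,
    cpow_add _ _ two_ne_zero, cpow_one]
  ring

lemma isPreconnected_re_pos_diff_one : IsPreconnected ({s : ℂ | 0 < s.re} \ {1}) := by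
  set P : Set ℂ := {z | 0 < z.re ∧ 0 < z.im}
  set M : Set ℂ := {z | 0 < z.re ∧ z.im < 0}
  set S₀ : Set ℂ := {z | 0 < z.re ∧ z.re < 1}
  set S₁ : Set ℂ := {z | 1 < z.re}
  have hS₀P : IsPreconnected (S₀ ∪ P) :=
    ((convex_halfSpace_re_gt 0).inter (convex_halfSpace_re_lt 1)).isPreconnected.union
      (x := ⟨1 / 2, 1 / 2⟩) (by norm_num [S₀]) (by norm_num [P])
      ((convex_halfSpace_re_gt 0).inter (convex_halfSpace_im_gt 0)).isPreconnected
  have hS₀PS₁ : IsPreconnected (S₀ ∪ P ∪ S₁) :=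
    hS₀P.union (x := ⟨2, 1⟩) (by norm_num [P]) (by norm_num [S₁])
      (convex_halfSpace_re_gt 1).isPreconnected
  have hall : IsPreconnected (S₀ ∪ P ∪ S₁ ∪ M) :=
    hS₀PS₁.union (x := ⟨1 / 2, -1 / 2⟩) (by norm_num [S₀]) (by norm_num [M])
      ((convex_halfSpace_re_gt 0).inter (convex_halfSpace_im_lt 0)).isPreconnected
  convert hall using 1
  ext z
  simp only [Set.mem_sdiff, Set.mem_ofPred_eq, Set.mem_singleton_iff, Complex.ext_iff, one_re,
    one_im, not_and, Set.mem_union, S₀, P, S₁, M]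
  grind

theorem dirichletEta_eq {s : ℂ} (hs : 0 < s.re) (hs1 : s ≠ 1) :
    dirichletEta s = (1 - 2 ^ (1 - s)) * riemannZeta s := by
  have hU : IsOpen ({s : ℂ | 0 < s.re} \ {1}) :=
    (isOpen_lt continuous_const continuous_re).sdiff isClosed_singleton
  have hη : AnalyticOnNhd ℂ dirichletEta ({s : ℂ | 0 < s.re} \ {1}) :=
    (differentiableOn_dirichletEta.mono Set.sdiff_subset).analyticOnNhd hU
  have hζ : AnalyticOnNhd ℂ (fun s => (1 - 2 ^ (1 - s)) * riemannZeta s)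
      ({s : ℂ | 0 < s.re} \ {1}) := by
    refine DifferentiableOn.analyticOnNhd (fun z hz => ?_) hU
    have h2 : DifferentiableAt ℂ (fun s : ℂ => (2 : ℂ) ^ (1 - s)) z :=
      ((differentiableAt_const _).sub differentiableAt_id).const_cpow (.inl two_ne_zero)
    exact ((differentiableAt_const _).sub h2).mul (differentiableAt_riemannZeta hz.2)
      |>.differentiableWithinAt
  have heq : dirichletEta =ᶠ[𝓝 2] fun s => (1 - 2 ^ (1 - s)) * riemannZeta s := by
    filter_upwards [(isOpen_lt continuous_const continuous_re).mem_nhds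
      (show (1 : ℝ) < (2 : ℂ).re by norm_num)] with z hz using dirichletEta_eq_of_one_lt_re hz
  exact hη.eqOn_of_preconnected_of_eventuallyEq hζ isPreconnected_re_pos_diff_one
    ⟨by norm_num, by norm_num⟩ heq ⟨hs, hs1⟩

lemma tendsto_cpow_mul_sum_alternating_cpow_mul_cpow {y : ℝ} (hy : 0 < y) {c w s : ℂ}
    (hs : 0 < s.re) (hcw : c + w = -s) :
    Tendsto (fun N : ℕ => (y : ℂ) ^ c * ∑ n ∈ range N, (-1 : ℂ) ^ n *
        ((((n + 1 : ℕ) : ℝ) * y : ℝ) : ℂ) ^ c * ((((n + 1 : ℕ) : ℝ) * y : ℝ) : ℂ) ^ w)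
      atTop (𝓝 (dirichletEta s * (y : ℂ) ^ (c - s))) := by
  have hterm : ∀ n : ℕ, (-1 : ℂ) ^ n * ((((n + 1 : ℕ) : ℝ) * y : ℝ) : ℂ) ^ c *
      ((((n + 1 : ℕ) : ℝ) * y : ℝ) : ℂ) ^ w
        = (-1 : ℂ) ^ n * ((n + 1 : ℕ) : ℂ) ^ (-s) * (y : ℂ) ^ (-s) := by
    intro n
    rw [mul_assoc, ← cpow_add _ _ (ofReal_ne_zero.2 (by positivity)), hcw, ofReal_mul,
      mul_cpow_ofReal_nonneg (by positivity) hy.le, ofReal_natCast, mul_assoc]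
  have hy' : (y : ℂ) ^ (c - s) = (y : ℂ) ^ c * (y : ℂ) ^ (-s) := by
    rw [sub_eq_add_neg, cpow_add _ _ (ofReal_ne_zero.2 hy.ne')]
  rw [hy', mul_comm]
  refine ((tendsto_sum_range_alternating_cpow hs).const_mul _).congr fun N => ?_
  rw [sum_congr rfl fun n _ => hterm n, ← sum_mul]
  ring

lemma tendsto_cpow_mul_sum_alternating_inv_mul_cpow {x : ℝ} (hx : 0 < x) {d v s K : ℂ}
    (hs : 0 < s.re) (hdv : 1 + d + v = s) {g : ℝ → ℂ}
    (hg : ∀ y : ℝ, 0 < y → g y = K * (y : ℂ) ^ v) :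
    Tendsto (fun N : ℕ => (x : ℂ) ^ d * ∑ m ∈ range N, (-1 : ℂ) ^ m * ((m + 1 : ℕ) : ℂ)⁻¹ *
        (((x / ((m + 1 : ℕ) : ℝ)) : ℝ) : ℂ) ^ d * g (x / ((m + 1 : ℕ) : ℝ)))
      atTop (𝓝 (dirichletEta s * K * (x : ℂ) ^ (d + (d + v)))) := by
  have hterm : ∀ m : ℕ, (-1 : ℂ) ^ m * ((m + 1 : ℕ) : ℂ)⁻¹ *
      (((x / ((m + 1 : ℕ) : ℝ)) : ℝ) : ℂ) ^ d * g (x / ((m + 1 : ℕ) : ℝ))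
        = (-1 : ℂ) ^ m * ((m + 1 : ℕ) : ℂ) ^ (-s) * (K * (x : ℂ) ^ (d + v)) := by
    intro m
    have hm : (0 : ℝ) < ((m + 1 : ℕ) : ℝ) := by positivity
    have hm' : ((m + 1 : ℕ) : ℂ) ≠ 0 := by exact_mod_cast hm.ne'
    have hpow : ((m + 1 : ℕ) : ℂ) ^ (-s) = ((m + 1 : ℕ) : ℂ)⁻¹ / ((m + 1 : ℕ) : ℂ) ^ (d + v) := by
      rw [← hdv, show -(1 + d + v) = -1 + -(d + v) by ring, cpow_add _ _ hm', cpow_neg_one,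
        cpow_neg, div_eq_mul_inv]
    have hquot : (((x / ((m + 1 : ℕ) : ℝ)) : ℝ) : ℂ) ^ d * (((x / ((m + 1 : ℕ) : ℝ)) : ℝ) : ℂ) ^ v
        = (x : ℂ) ^ (d + v) / ((m + 1 : ℕ) : ℂ) ^ (d + v) := by
      rw [← cpow_add _ _ (ofReal_ne_zero.2 (by positivity)), ofReal_div,
        div_cpow_ofReal_nonneg hx.le hm.le, ofReal_natCast]
    rw [hg _ (by positivity), hpow]
    linear_combination (-1 : ℂ) ^ m * ((m + 1 : ℕ) : ℂ)⁻¹ * K * hquot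
  have hx' : (x : ℂ) ^ (d + (d + v)) = (x : ℂ) ^ d * (x : ℂ) ^ (d + v) :=
    cpow_add _ _ (ofReal_ne_zero.2 hx.ne')
  rw [hx', show ∀ a b c e : ℂ, a * b * (c * e) = c * (b * e) * a by intros; ring]
  refine ((tendsto_sum_range_alternating_cpow hs).const_mul _).congr fun N => ?_
  rw [sum_congr rfl fun m _ => hterm m, ← sum_mul]
  ring

/-- Action of the supersymmetric partner Hamiltonian `H₋ = A†(ω) A(ω)` on `x^{-σ+iρ}`.
Here `g` is the result of applying `A(ω)` to `x^{-σ+iρ}` (defined for `y > 0` as the limit of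
the partial sums), and the claim is that applying `A†(ω)` to `g` gives a convergent series
whose sum is
`(1 - 2^{σ-i(ρ-ω/2)})(1 - 2^{(1-σ)+i(ρ-ω/2)}) ζ(σ-i(ρ-ω/2)) ζ(1-σ+i(ρ-ω/2)) x^{-σ+iρ}`. -/
theorem Hminus_action (σ ρ ω : ℝ) (h0 : 0 < σ) (h1 : σ < 1) (g : ℝ → ℂ)
    (hg : ∀ y : ℝ, 0 < y →
      Filter.Tendsto
        (fun N : ℕ => (y : ℂ) ^ (-(Complex.I * (ω : ℂ)) / 2) *
          ∑ n ∈ Finset.range N, (-1 : ℂ) ^ n *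
            ((((n + 1 : ℕ) : ℝ) * y : ℝ) : ℂ) ^ (-(Complex.I * (ω : ℂ)) / 2) *
            ((((n + 1 : ℕ) : ℝ) * y : ℝ) : ℂ) ^ (-(σ : ℂ) + Complex.I * (ρ : ℂ)))
        Filter.atTop (nhds (g y)))
    (x : ℝ) (hx : 0 < x) :
    Filter.Tendsto
      (fun N : ℕ => (x : ℂ) ^ (Complex.I * (ω : ℂ) / 2) *
        ∑ m ∈ Finset.range N, (-1 : ℂ) ^ m * ((m + 1 : ℕ) : ℂ)⁻¹ *
          (((x / ((m + 1 : ℕ) : ℝ)) : ℝ) : ℂ) ^ (Complex.I * (ω : ℂ) / 2) *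
          g (x / ((m + 1 : ℕ) : ℝ)))
      Filter.atTop
      (nhds ((1 - (2 : ℂ) ^ ((σ : ℂ) - Complex.I * ((ρ : ℂ) - (ω : ℂ) / 2))) *
        (1 - (2 : ℂ) ^ ((1 - (σ : ℂ)) + Complex.I * ((ρ : ℂ) - (ω : ℂ) / 2))) *
        riemannZeta ((σ : ℂ) - Complex.I * ((ρ : ℂ) - (ω : ℂ) / 2)) *
        riemannZeta (1 - (σ : ℂ) + Complex.I * ((ρ : ℂ) - (ω : ℂ) / 2)) *
        (x : ℂ) ^ (-(σ : ℂ) + Complex.I * (ρ : ℂ)))) := by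
  set s : ℂ := (σ : ℂ) - I * ((ρ : ℂ) - (ω : ℂ) / 2) with hs_def
  have hs : 0 < s.re := by simpa [s] using h0
  have hs' : 0 < (1 - s).re := by simpa [s] using h1
  have hgs : ∀ y : ℝ, 0 < y → g y = dirichletEta s * (y : ℂ) ^ (-(I * ω) / 2 - s) :=
    fun y hy => tendsto_nhds_unique (hg y hy)
      (tendsto_cpow_mul_sum_alternating_cpow_mul_cpow hy hs (by ring))
  have h := tendsto_cpow_mul_sum_alternating_inv_mul_cpow (d := I * ω / 2) hx hs' (by ring) hgs
  rw [dirichletEta_eq hs (ne_of_apply_ne re (by simpa [s] using h1.ne)),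
    dirichletEta_eq hs' (ne_of_apply_ne re (by simpa [s] using h0.ne')), sub_sub_cancel] at h
  convert h using 2
  rw [show (1 - σ : ℂ) + I * (ρ - ω / 2) = 1 - s by rw [hs_def]; ring,
    show -(σ : ℂ) + I * ρ = I * ω / 2 + (I * ω / 2 + (-(I * ω) / 2 - s)) by rw [hs_def]; ring]
  ring
end
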